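/- For n divisible by 3, the maximum of q*(G) over 2-regular n-vertex graphs G equals 1 − 3/n, attained uniquely by the disjoint union of n/3 triangles with the connected-components partition. -/

import Mathlib

/-!
In a 2-regular graph on `n` vertices there are `n` edges and `vol A = 2 |A|`, so a part `A` of a
partition contributes `e(A) / n - (|A| / n) ^ 2` to its modularity score. As `e(A) ≤ |A|` (degree
two) and `e(A) ≤ |A| (|A| - 1) / 2`, this is at most `|A| (n - 3) / n ^ 2`, with equality only when
`A` is a triangle closed under adjacency, i.e. a triangle component; summing over the parts gives
`1 - 3 / n`. There are finitely many partitions, so the supremum is attained, and it equals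
`1 - 3 / n` exactly when every component is a triangle.
-/

open Finset
open scoped Classical

variable {V : Type*} [Fintype V] [DecidableEq V]

/-- Number of edges of `G` inside vertex set `A` (as a real number). -/
noncomputable def eIn (G : SimpleGraph V) (A : Finset V) : ℝ :=
  (1/2) * ∑ u ∈ A, ∑ v ∈ A, if G.Adj u v then (1:ℝ) else 0

/-- Total number of edges of `G` (as a real number). -/
noncomputable def numEdges (G : SimpleGraph V) : ℝ := eIn G (univ : Finset V)

/-- Degree of vertex `v` in `G` (as a real number). -/
noncomputable def degR (G : SimpleGraph V) (v : V) : ℝ :=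
  ∑ u : V, if G.Adj v u then (1:ℝ) else 0

/-- Volume of vertex set `A`: sum of degrees of its vertices. -/
noncomputable def vol (G : SimpleGraph V) (A : Finset V) : ℝ := ∑ v ∈ A, degR G v

/-- Number of edges of `G` between `A` and its complement (as a real number). -/
noncomputable def eCross (G : SimpleGraph V) (A : Finset V) : ℝ :=
  ∑ u ∈ A, ∑ v ∈ (univ : Finset V) \ A, if G.Adj u v then (1:ℝ) else 0

/-- The modularity score of a vertex partition `P` of `G`. -/
noncomputable def modScore (G : SimpleGraph V) (P : Finpartition (univ : Finset V)) : ℝ :=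
  (∑ A ∈ P.parts, eIn G A) / numEdges G
    - (∑ A ∈ P.parts, (vol G A)^2) / (4 * (numEdges G)^2)

/-- The modularity of `G`: the supremum of modularity scores over all vertex partitions. -/
noncomputable def modularity (G : SimpleGraph V) : ℝ :=
  sSup { q : ℝ | ∃ P : Finpartition (univ : Finset V), q = modScore G P }

namespace SimpleGraph

variable {α : Type*} [Fintype α] {G : SimpleGraph α}

lemma degR_eq_degree (G : SimpleGraph α) (v : α) : degR G v = G.degree v := by
  simp [degR, ← card_neighborFinset_eq_degree, neighborFinset_eq_filter, sum_boole]

omit [Fintype α] in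
lemma two_mul_eIn (G : SimpleGraph α) (A : Finset α) :
    2 * eIn G A = ∑ u ∈ A, (#{v ∈ A | G.Adj u v} : ℝ) := by
  simp [eIn, sum_boole]

lemma card_filter_adj_le_degree (A : Finset α) (u : α) :
    #{v ∈ A | G.Adj u v} ≤ G.degree u := by
  rw [← card_neighborFinset_eq_degree]
  exact card_le_card fun v hv => by simpa using (mem_filter.1 hv).2

lemma card_filter_adj_eq_degree_iff (A : Finset α) (u : α) :
    #{v ∈ A | G.Adj u v} = G.degree u ↔ ∀ v, G.Adj u v → v ∈ A := by
  have hsub : {v ∈ A | G.Adj u v} ⊆ G.neighborFinset u :=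
    fun v hv => by simpa using (mem_filter.1 hv).2
  rw [← card_neighborFinset_eq_degree]
  constructor
  · intro h v huv
    have := eq_of_subset_of_card_le hsub h.ge ▸ (mem_neighborFinset G u v).2 huv
    exact (mem_filter.1 this).1
  · intro h
    congr 1
    ext v
    simpa using h v

lemma two_mul_eIn_le_vol (A : Finset α) : 2 * eIn G A ≤ vol G A := by
  rw [two_mul_eIn, vol]
  exact sum_le_sum fun u _ => by
    rw [degR_eq_degree]; exact_mod_cast card_filter_adj_le_degree A u

lemma two_mul_eIn_eq_vol_iff (A : Finset α) :
    2 * eIn G A = vol G A ↔ ∀ u ∈ A, ∀ v, G.Adj u v → v ∈ A := by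
  simp only [two_mul_eIn, vol, degR_eq_degree]
  rw [sum_eq_sum_iff_of_le fun u _ => by exact_mod_cast card_filter_adj_le_degree A u]
  simp only [Nat.cast_inj, card_filter_adj_eq_degree_iff]

omit [Fintype α] in
lemma two_mul_eIn_le_card_mul (A : Finset α) : 2 * eIn G A ≤ #A * (#A - 1 : ℝ) := by
  have hlt : ∀ u ∈ A, #{v ∈ A | G.Adj u v} < #A := fun u hu =>
    card_lt_card <| filter_ssubset.2 ⟨u, hu, G.irrefl⟩
  rw [two_mul_eIn, ← nsmul_eq_mul, ← sum_const]
  exact sum_le_sum fun u hu => by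
    rw [le_sub_iff_add_le]; exact_mod_cast hlt u hu

lemma vol_of_isRegularOfDegree {d : ℕ} (hG : G.IsRegularOfDegree d) (A : Finset α) :
    vol G A = d * #A := by
  simp [vol, degR_eq_degree, hG.degree_eq, mul_comm]

lemma numEdges_of_isRegularOfDegree {d : ℕ} (hG : G.IsRegularOfDegree d) :
    2 * numEdges G = d * Fintype.card α := by
  rw [numEdges, (two_mul_eIn_eq_vol_iff univ).2 fun _ _ v _ => mem_univ v,
    vol_of_isRegularOfDegree hG, card_univ]

omit [Fintype α] in
lemma mem_of_reachable_of_adj_closed {A : Finset α} (hA : ∀ u ∈ A, ∀ v, G.Adj u v → v ∈ A)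
    {u v : α} (huv : G.Reachable u v) (hu : u ∈ A) : v ∈ A := by
  rw [reachable_iff_reflTransGen] at huv
  induction huv with
  | refl => exact hu
  | tail _ hadj ih => exact hA _ ih _ hadj

lemma card_insert_neighborFinset [DecidableEq α] (hG : G.IsRegularOfDegree 2) (u : α) :
    #(insert u (G.neighborFinset u)) = 3 := by
  rw [card_insert_of_notMem (by simp), card_neighborFinset_eq_degree, hG u]

lemma eq_insert_neighborFinset_of_adj_closed [DecidableEq α] (hG : G.IsRegularOfDegree 2)
    {A : Finset α} (hA3 : #A = 3) (hA : ∀ u ∈ A, ∀ v, G.Adj u v → v ∈ A) {u : α} (hu : u ∈ A) :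
    A = insert u (G.neighborFinset u) := by
  refine (eq_of_subset_of_card_le (insert_subset hu fun v hv => ?_) ?_).symm
  · exact hA u hu v ((mem_neighborFinset G u v).1 hv)
  · rw [hA3, card_insert_neighborFinset hG]

end SimpleGraph

/-- `n ^ 2` times the amount by which a part with `a` vertices and `e` inner edges falls short of
its share `a * (n - 3) / n ^ 2` of the bound `1 - 3 / n`. -/
lemma triangle_deficit_pos {n e : ℝ} {a : ℕ} (hn : 3 ≤ n) (ha : 1 ≤ a) (he : e ≤ a)
    (he' : 2 * e ≤ a * (a - 1)) (htri : ¬(a = 3 ∧ e = 3)) : 0 < n * (a - e) + a * (a - 3) := by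
  rcases le_or_gt 4 a with h4 | h3
  · have : (4 : ℝ) ≤ a := by exact_mod_cast h4
    nlinarith
  · interval_cases a
    · norm_num at he' ⊢; nlinarith
    · norm_num at he' ⊢; nlinarith
    · have : e < 3 := lt_of_le_of_ne (by exact_mod_cast he) fun h => htri ⟨rfl, h⟩
      norm_num; nlinarith

open SimpleGraph

variable {α : Type*} [Fintype α]

noncomputable def partScore (G : SimpleGraph α) (A : Finset α) : ℝ :=
  eIn G A / numEdges G - vol G A ^ 2 / (4 * numEdges G ^ 2)

lemma partScore_of_isRegularOfDegree_two {G : SimpleGraph α} (hG : G.IsRegularOfDegree 2)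
    (A : Finset α) :
    partScore G A = eIn G A / Fintype.card α - (#A / Fintype.card α : ℝ) ^ 2 := by
  have hm : numEdges G = Fintype.card α := by
    have := numEdges_of_isRegularOfDegree hG
    push_cast at this
    linarith
  rw [partScore, hm, vol_of_isRegularOfDegree hG]
  ring

lemma partScore_lt_or_triangle {G : SimpleGraph α} (hG : G.IsRegularOfDegree 2)
    (hn : 3 ≤ Fintype.card α) {A : Finset α} (hA : A.Nonempty) :
    partScore G A < #A * (Fintype.card α - 3 : ℝ) / Fintype.card α ^ 2 ∨
      (#A = 3 ∧ eIn G A = 3) := by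
  by_cases htri : #A = 3 ∧ eIn G A = 3
  · exact Or.inr htri
  have hn' : (3 : ℝ) ≤ Fintype.card α := by exact_mod_cast hn
  have he : eIn G A ≤ #A := by
    have hvol := vol_of_isRegularOfDegree hG A
    push_cast at hvol
    linarith [two_mul_eIn_le_vol (G := G) A]
  have hpos := triangle_deficit_pos hn' hA.card_pos he (two_mul_eIn_le_card_mul A) htri
  have hn0 : (0 : ℝ) < Fintype.card α := by linarith
  have hgap : #A * (Fintype.card α - 3 : ℝ) / Fintype.card α ^ 2
      - (eIn G A / Fintype.card α - (#A / Fintype.card α : ℝ) ^ 2)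
      = (Fintype.card α * (#A - eIn G A) + #A * (#A - 3)) / Fintype.card α ^ 2 := by
    field_simp
    ring
  left
  rw [← sub_pos, partScore_of_isRegularOfDegree_two hG, hgap]
  exact div_pos hpos (by positivity)

lemma partScore_of_triangle {G : SimpleGraph α} (hG : G.IsRegularOfDegree 2) {A : Finset α}
    (hA : #A = 3 ∧ eIn G A = 3) :
    partScore G A = #A * (Fintype.card α - 3 : ℝ) / Fintype.card α ^ 2 := by
  have hn : (3 : ℝ) ≤ Fintype.card α := by exact_mod_cast hA.1 ▸ card_le_univ A
  rw [partScore_of_isRegularOfDegree_two hG, hA.1, hA.2]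
  field_simp
  ring

lemma partScore_le {G : SimpleGraph α} (hG : G.IsRegularOfDegree 2) (hn : 3 ≤ Fintype.card α)
    {A : Finset α} (hA : A.Nonempty) :
    partScore G A ≤ #A * (Fintype.card α - 3 : ℝ) / Fintype.card α ^ 2 :=
  (partScore_lt_or_triangle hG hn hA).elim le_of_lt fun htri => (partScore_of_triangle hG htri).le

lemma partScore_eq_iff {G : SimpleGraph α} (hG : G.IsRegularOfDegree 2) (hn : 3 ≤ Fintype.card α)
    {A : Finset α} (hA : A.Nonempty) :
    partScore G A = #A * (Fintype.card α - 3 : ℝ) / Fintype.card α ^ 2 ↔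
      #A = 3 ∧ eIn G A = 3 :=
  ⟨fun h => (partScore_lt_or_triangle hG hn hA).resolve_left h.not_lt, partScore_of_triangle hG⟩

variable [DecidableEq α]

lemma modScore_eq_sum_partScore (G : SimpleGraph α) (P : Finpartition (univ : Finset α)) :
    modScore G P = ∑ A ∈ P.parts, partScore G A := by
  simp only [modScore, partScore, sum_sub_distrib, sum_div]

lemma sum_card_mul_div_parts (P : Finpartition (univ : Finset α)) (hn : 0 < Fintype.card α) :
    ∑ A ∈ P.parts, #A * (Fintype.card α - 3 : ℝ) / Fintype.card α ^ 2 =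
      1 - 3 / Fintype.card α := by
  have hsum : ∑ A ∈ P.parts, (#A : ℝ) = Fintype.card α := by
    exact_mod_cast P.sum_card_parts
  have hn' : (0 : ℝ) < Fintype.card α := by exact_mod_cast hn
  rw [← sum_div, ← sum_mul, hsum]
  field_simp

lemma modScore_le {G : SimpleGraph α} (hG : G.IsRegularOfDegree 2) (hn : 3 ≤ Fintype.card α)
    (P : Finpartition (univ : Finset α)) : modScore G P ≤ 1 - 3 / Fintype.card α := by
  rw [modScore_eq_sum_partScore, ← sum_card_mul_div_parts P (by omega)]
  exact sum_le_sum fun A hA => partScore_le hG hn (P.nonempty_of_mem_parts hA)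

lemma modScore_eq_iff {G : SimpleGraph α} (hG : G.IsRegularOfDegree 2) (hn : 3 ≤ Fintype.card α)
    (P : Finpartition (univ : Finset α)) :
    modScore G P = 1 - 3 / Fintype.card α ↔ ∀ A ∈ P.parts, #A = 3 ∧ eIn G A = 3 := by
  rw [modScore_eq_sum_partScore, ← sum_card_mul_div_parts P (by omega),
    sum_eq_sum_iff_of_le fun A hA => partScore_le hG hn (P.nonempty_of_mem_parts hA)]
  exact forall₂_congr fun A hA => partScore_eq_iff hG hn (P.nonempty_of_mem_parts hA)

lemma finite_modScores (G : SimpleGraph α) :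
    {q : ℝ | ∃ P : Finpartition (univ : Finset α), q = modScore G P}.Finite :=
  (Set.finite_range (modScore G)).subset fun _ ⟨P, hP⟩ => ⟨P, hP.symm⟩

lemma modScore_le_modularity (G : SimpleGraph α) (P : Finpartition (univ : Finset α)) :
    modScore G P ≤ modularity G :=
  le_csSup (finite_modScores G).bddAbove ⟨P, rfl⟩

lemma exists_modScore_eq_modularity (G : SimpleGraph α) :
    ∃ P : Finpartition (univ : Finset α), modScore G P = modularity G := by
  have hne : {q : ℝ | ∃ P : Finpartition (univ : Finset α), q = modScore G P}.Nonempty :=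
    ⟨modScore G ⊥, ⊥, rfl⟩
  obtain ⟨P, hP⟩ := hne.csSup_mem (finite_modScores G)
  exact ⟨P, hP.symm⟩

namespace SimpleGraph

variable {G : SimpleGraph α}

lemma reachable_imp_eq_or_adj_of_triangle_parts (hG : G.IsRegularOfDegree 2)
    (P : Finpartition (univ : Finset α)) (hP : ∀ A ∈ P.parts, #A = 3 ∧ eIn G A = 3)
    (u v : α) (huv : G.Reachable u v) : u = v ∨ G.Adj u v := by
  have hA := P.part_mem.2 (mem_univ u)
  have hu : u ∈ P.part u := P.mem_part (mem_univ u)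
  obtain ⟨h3, he⟩ := hP _ hA
  have hclosed : ∀ x ∈ P.part u, ∀ y, G.Adj x y → y ∈ P.part u := by
    rw [← two_mul_eIn_eq_vol_iff, vol_of_isRegularOfDegree hG, h3, he]
    norm_num
  have hv := mem_of_reachable_of_adj_closed hclosed huv hu
  rw [eq_insert_neighborFinset_of_adj_closed hG h3 hclosed hu, mem_insert,
    mem_neighborFinset] at hv
  exact hv.imp_left Eq.symm

lemma exists_triangle_parts (hG : G.IsRegularOfDegree 2)
    (hT : ∀ u v : α, G.Reachable u v → u = v ∨ G.Adj u v) :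
    ∃ P : Finpartition (univ : Finset α), ∀ A ∈ P.parts, #A = 3 ∧ eIn G A = 3 := by
  refine ⟨Finpartition.ofSetoid G.reachableSetoid, fun A hA => ?_⟩
  obtain ⟨a, ha⟩ := (Finpartition.ofSetoid G.reachableSetoid).nonempty_of_mem_parts hA
  have hmem : ∀ b, b ∈ A ↔ G.Reachable a b := fun b => by
    rw [← Finpartition.part_eq_of_mem _ hA ha]
    exact Finpartition.mem_part_ofSetoid_iff_rel
  have hA3 : #A = 3 := by
    rw [← card_insert_neighborFinset hG a]
    congr 1
    ext b
    rw [hmem, mem_insert, mem_neighborFinset]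
    exact ⟨fun h => (hT a b h).imp_left Eq.symm,
      fun h => h.elim (fun h => h ▸ Reachable.refl _) Adj.reachable⟩
  have hclosed : ∀ x ∈ A, ∀ y, G.Adj x y → y ∈ A := fun x hx y hxy => by
    rw [hmem] at hx ⊢
    exact hx.trans hxy.reachable
  refine ⟨hA3, ?_⟩
  have := (two_mul_eIn_eq_vol_iff A).2 hclosed
  rw [vol_of_isRegularOfDegree hG, hA3] at this
  norm_num at this
  linarith

end SimpleGraph

theorem modularity_le_of_isRegularOfDegree_two {G : SimpleGraph α} (hG : G.IsRegularOfDegree 2)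
    (hn : 3 ≤ Fintype.card α) : modularity G ≤ 1 - 3 / Fintype.card α := by
  obtain ⟨P, hP⟩ := exists_modScore_eq_modularity G
  exact hP ▸ modScore_le hG hn P

theorem modularity_eq_iff_of_isRegularOfDegree_two {G : SimpleGraph α}
    (hG : G.IsRegularOfDegree 2) (hn : 3 ≤ Fintype.card α) :
    modularity G = 1 - 3 / Fintype.card α ↔ ∀ u v : α, G.Reachable u v → u = v ∨ G.Adj u v := by
  constructor
  · intro h
    obtain ⟨P, hP⟩ := exists_modScore_eq_modularity G
    exact G.reachable_imp_eq_or_adj_of_triangle_parts hG P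
      ((modScore_eq_iff hG hn P).1 (hP.trans h))
  · intro hT
    obtain ⟨P, hP⟩ := G.exists_triangle_parts hG hT
    exact (modularity_le_of_isRegularOfDegree_two hG hn).antisymm
      ((modScore_eq_iff hG hn P).2 hP ▸ modScore_le_modularity G P)

def triangleUnion (n : ℕ) : SimpleGraph (Fin n) where
  Adj u v := u ≠ v ∧ u.val / 3 = v.val / 3
  symm := ⟨fun _ _ h => ⟨h.1.symm, h.2.symm⟩⟩
  loopless := ⟨fun _ h => h.1 rfl⟩

@[simp]
lemma triangleUnion_adj {n : ℕ} {u v : Fin n} :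
    (triangleUnion n).Adj u v ↔ u ≠ v ∧ u.val / 3 = v.val / 3 := Iff.rfl

namespace triangleUnion

variable {n : ℕ}

lemma card_filter_div_three_eq (hn : 3 ∣ n) (v : Fin n) :
    #{u : Fin n | u.val / 3 = v.val / 3} = 3 := by
  have hlt : ∀ m ∈ Ico (3 * (v.val / 3)) (3 * (v.val / 3) + 3), m < n := fun m hm => by
    obtain ⟨k, rfl⟩ := hn
    have := v.isLt
    simp only [mem_Ico] at hm
    omega
  rw [show ({u : Fin n | u.val / 3 = v.val / 3} : Finset (Fin n)) = (Ico _ _).attachFin hlt by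
    ext u; simp only [mem_filter, mem_univ, true_and, mem_attachFin, mem_Ico]; omega]
  simp

lemma isRegularOfDegree_two (hn : 3 ∣ n) : (triangleUnion n).IsRegularOfDegree 2 := fun v => by
  have : (triangleUnion n).neighborFinset v =
      ({u : Fin n | u.val / 3 = v.val / 3} : Finset (Fin n)).erase v := by
    ext u
    simp [eq_comm]
  rw [← card_neighborFinset_eq_degree, this, card_erase_of_mem (by simp),
    card_filter_div_three_eq hn]

lemma reachable_imp_eq_or_adj (u v : Fin n) (huv : (triangleUnion n).Reachable u v) :
    u = v ∨ (triangleUnion n).Adj u v := by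
  have hv : v ∈ ({w : Fin n | w.val / 3 = u.val / 3} : Finset (Fin n)) :=
    mem_of_reachable_of_adj_closed (fun x hx y hxy => by simp_all) huv (by simp)
  simp only [mem_filter, mem_univ, true_and] at hv
  by_cases h : u = v
  · exact Or.inl h
  · exact Or.inr ⟨h, hv.symm⟩

end triangleUnion

/-- for `3 ∣ n`, the maximum modularity of a 2-regular `n`-vertex graph is
`1 - 3/n`, attained exactly by disjoint unions of triangles (every component is a
complete graph on 3 vertices). -/
theorem two_regular_max_modularity (n : ℕ) (h0 : 0 < n) (hn : 3 ∣ n) :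
    (∀ G : SimpleGraph (Fin n), G.IsRegularOfDegree 2 →
        modularity G ≤ 1 - 3 / (n : ℝ))
    ∧ (∃ G : SimpleGraph (Fin n), G.IsRegularOfDegree 2 ∧
        modularity G = 1 - 3 / (n : ℝ))
    ∧ (∀ G : SimpleGraph (Fin n), G.IsRegularOfDegree 2 →
        (modularity G = 1 - 3 / (n : ℝ) ↔
          ∀ u v : Fin n, G.Reachable u v → u = v ∨ G.Adj u v)) := by
  have hn3 : 3 ≤ Fintype.card (Fin n) := by simpa using Nat.le_of_dvd h0 hn
  have htri := triangleUnion.isRegularOfDegree_two hn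
  refine ⟨fun G hG => ?_, ⟨triangleUnion n, htri, ?_⟩, fun G hG => ?_⟩
  · simpa using modularity_le_of_isRegularOfDegree_two hG hn3
  · simpa using (modularity_eq_iff_of_isRegularOfDegree_two htri hn3).2
      triangleUnion.reachable_imp_eq_or_adj
  · simpa using modularity_eq_iff_of_isRegularOfDegree_two hG hn3
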